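/- Let A be a symmetric hollow integer matrix of order at least 3 such that every principal submatrix of A of order 3 has smallest eigenvalue strictly greater than -√5. Then there exist a signed graph F and a function a : V(F) → ℕ⁺ such that A is switching equivalent to the blow-up matrix A_{F,a}. -/

import Mathlib

open Matrix

/-- The blow-up matrix `A_{F,a}` of a signed adjacency matrix `AF`. -/
def blowup {V : Type*} [DecidableEq V] (AF : Matrix V V ℤ) (a : V → ℕ) :
    Matrix (Σ v : V, Fin (a v)) (Σ v : V, Fin (a v)) ℤ :=
  fun p q => if p = q then 0 else if p.1 = q.1 then 2 else AF p.1 q.1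

/-!
For a hollow symmetric matrix `M` on three indices with off-diagonal entries `x, y, z`,
`det (M + t • 1) = t³ - (x² + y² + z²) t + 2xyz`, so the spectral hypothesis says that this cubic
is positive for `t ≥ √5`. Evaluating it at `t = |x|` bounds every entry by `2` in absolute value.
Evaluating it at `t = √5` leaves two rules for distinct `i, j, k`: if `A i j` and `A j k` are `±2`
then so is `A i k` and `A i j * A j k * A i k = 8`; if `A i j = ±2` and `|A i k| < 2` then
`2 * A j k = A i j * A i k`. Both rules are invariant under switching. The first makes
"`i = j` or `A i j = ±2`" an equivalence relation; switching so that the entries from a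
representative of each class to the rest of its class are `2` makes all entries inside a class `2`,
and the second rule then makes the entries between two classes constant and in `{0, ±1}`. This is
the blow-up of the signed graph on the classes.
-/

noncomputable def triangleCubic (x y z : ℤ) (t : ℝ) : ℝ :=
  t ^ 3 - ((x : ℝ) ^ 2 + (y : ℝ) ^ 2 + (z : ℝ) ^ 2) * t + 2 * (x * y * z)

lemma sq_le_four_of_triangleCubic_pos {x y z : ℤ}
    (H : ∀ t : ℝ, √5 ≤ t → 0 < triangleCubic x y z t) : x ^ 2 ≤ 4 := by
  by_contra! hx
  have habs : √5 ≤ ((|x| : ℤ) : ℝ) := by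
    rw [Real.sqrt_le_left (by positivity), ← Int.cast_pow, sq_abs]
    exact_mod_cast hx
  have hpos : 0 < |x| ^ 3 - (x ^ 2 + y ^ 2 + z ^ 2) * |x| + 2 * (x * y * z) := by
    have := H _ habs
    unfold triangleCubic at this
    exact_mod_cast this
  have hxyz : x * y * z ≤ |x| * |y| * |z| := by
    rw [← abs_mul, ← abs_mul]; exact le_abs_self _
  have hneg : |x| ^ 3 - (x ^ 2 + y ^ 2 + z ^ 2) * |x| + 2 * (x * y * z) ≤
      -(|x| * (|y| - |z|) ^ 2) := by
    rw [← sq_abs x, ← sq_abs y, ← sq_abs z]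
    linarith
  linarith [mul_nonneg (abs_nonneg x) (sq_nonneg (|y| - |z|))]

lemma triangle_rules_of_triangleCubic_sqrt_five_pos {x y z : ℤ}
    (hx : x ^ 2 ≤ 4) (hy : y ^ 2 ≤ 4) (hz : z ^ 2 ≤ 4) (h : 0 < triangleCubic x y z √5) :
    (x ^ 2 = 4 → y ^ 2 = 4 → x * y * z = 8) ∧ (x ^ 2 = 4 → z ^ 2 ≠ 4 → 2 * y = x * z) := by
  obtain ⟨k, hk_def⟩ : ∃ k, k = 5 - (x ^ 2 + y ^ 2 + z ^ 2) := ⟨_, rfl⟩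
  -- `triangleCubic x y z √5 = √5 k + 2 x y z`; replace `√5` by the bounds `2 < √5 ≤ 9 / 4`
  have hcert : 0 < k + x * y * z ∨ 0 < 9 * k + 8 * (x * y * z) := by
    have hlo : 2 < √5 := by rw [Real.lt_sqrt (by norm_num)]; norm_num
    have hhi : √5 ≤ 9 / 4 := by rw [Real.sqrt_le_left (by norm_num)]; norm_num
    have h' : 0 < √5 * k + 2 * (x * y * z : ℤ) := by
      have h5 : √5 ^ 3 = 5 * √5 := by rw [pow_succ, Real.sq_sqrt (by norm_num)]
      simp only [triangleCubic, h5] at h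
      rw [hk_def]; push_cast
      linarith
    rcases le_or_gt 0 k with hk | hk
    · right
      have : (0 : ℝ) ≤ k := by exact_mod_cast hk
      exact_mod_cast (by nlinarith : (0 : ℝ) < 9 * k + 8 * (x * y * z : ℤ))
    · left
      have : (k : ℝ) < 0 := by exact_mod_cast hk
      exact_mod_cast (by nlinarith : (0 : ℝ) < k + (x * y * z : ℤ))
  have hbox : ∀ w : ℤ, w ^ 2 ≤ 4 → -2 ≤ w ∧ w ≤ 2 := fun w hw =>
    abs_le_of_sq_le_sq' (by linarith) zero_le_two
  obtain ⟨hx1, hx2⟩ := hbox x hx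
  obtain ⟨hy1, hy2⟩ := hbox y hy
  obtain ⟨hz1, hz2⟩ := hbox z hz
  subst hk_def
  clear h hx hy hz
  interval_cases x <;> interval_cases y <;> interval_cases z <;> omega

lemma Matrix.IsHermitian.det_add_smul_one_pos {ι : Type*} [Fintype ι] [DecidableEq ι]
    {M : Matrix ι ι ℝ} (hM : M.IsHermitian) {c : ℝ} (hc : ∀ μ ∈ spectrum ℝ M, c < μ)
    {t : ℝ} (ht : -c ≤ t) : 0 < (M + t • 1).det := by
  have hMt : (M + t • 1).IsHermitian := hM.add (by simp [IsHermitian])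
  rw [hMt.det_eq_prod_eigenvalues]
  refine Finset.prod_pos fun i _ => ?_
  have hmem : hMt.eigenvalues i - t + t ∈ spectrum ℝ (algebraMap ℝ _ t + M) := by
    rw [sub_add_cancel, Algebra.algebraMap_eq_smul_one, add_comm]
    exact hMt.eigenvalues_mem_spectrum_real i
  have := hc _ (spectrum.add_mem_add_iff.mp hmem)
  simp only [RCLike.ofReal_real_eq_id, id_eq]
  linarith

lemma det_hollow_fin_three_add_smul_one (x y z t : ℝ) :
    (!![0, x, z; x, 0, y; z, y, 0] + t • 1).det =
      t ^ 3 - (x ^ 2 + y ^ 2 + z ^ 2) * t + 2 * (x * y * z) := by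
  rw [det_fin_three]; simp; ring

lemma triangleCubic_pos_of_spectrum {n : ℕ} {A : Matrix (Fin n) (Fin n) ℤ}
    (hAs : A.IsSymm) (hAh : ∀ i, A i i = 0)
    (h3 : ∀ f : Fin 3 → Fin n, Function.Injective f →
      ∀ μ ∈ spectrum ℝ ((A.submatrix f f).map (fun x : ℤ => (x : ℝ))), -√5 < μ)
    {i j k : Fin n} (hij : i ≠ j) (hjk : j ≠ k) (hik : i ≠ k) {t : ℝ} (ht : √5 ≤ t) :
    0 < triangleCubic (A i j) (A j k) (A i k) t := by
  let M := (A.submatrix ![i, j, k] ![i, j, k]).map (fun x : ℤ => (x : ℝ))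
  have hM_apply : ∀ a b, M a b = A (![i, j, k] a) (![i, j, k] b) := fun _ _ => rfl
  have hinj : Function.Injective ![i, j, k] := by
    simp only [Matrix.vecCons, Fin.cons_injective_iff]
    simp [hij, hik, hjk, Function.Injective, eq_iff_true_of_subsingleton]
  have hM : M.IsHermitian := by
    ext a b
    rw [conjTranspose_apply, star_trivial, hM_apply, hM_apply, hAs.apply]
  have hM_eq : M = !![0, (A i j : ℝ), A i k; A i j, 0, A j k; A i k, A j k, 0] := by
    ext a b
    rw [hM_apply]
    fin_cases a <;> fin_cases b <;> simp [hAh, hAs.apply j i, hAs.apply k i, hAs.apply k j]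
  have := hM.det_add_smul_one_pos (h3 _ hinj) (t := t) (by rwa [neg_neg])
  rwa [hM_eq, det_hollow_fin_three_add_smul_one] at this

lemma Int.eq_zero_or_eq_one_or_eq_neg_one_of_sq_lt_four {x : ℤ} (h : x ^ 2 < 4) :
    x = 0 ∨ x = 1 ∨ x = -1 := by
  have : -2 < x := by nlinarith
  have : x < 2 := by nlinarith
  omega

lemma exists_blowup_of_classes {ι : Type*} [Fintype ι] {m : ℕ} (B : Matrix ι ι ℤ)
    (c : ι → Fin m) (hc : Function.Surjective c) (hs : B.IsSymm) (h0 : ∀ i, B i i = 0)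
    (hin : ∀ i j, i ≠ j → c i = c j → B i j = 2)
    (hout : ∀ i j, c i ≠ c j → B i j = 0 ∨ B i j = 1 ∨ B i j = -1)
    (hconst : ∀ i i' j, c i = c i' → c i ≠ c j → B i' j = B i j) :
    ∃ AF : Matrix (Fin m) (Fin m) ℤ,
      AF.IsSymm ∧ (∀ v, AF v v = 0) ∧ (∀ u v, AF u v = 0 ∨ AF u v = 1 ∨ AF u v = -1) ∧
      ∃ a : Fin m → ℕ, (∀ v, 1 ≤ a v) ∧
        ∃ e : ι ≃ (Σ v : Fin m, Fin (a v)), B = (blowup AF a).submatrix e e := by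
  let rep := Function.surjInv hc
  have hrep : ∀ v, c (rep v) = v := Function.surjInv_eq hc
  have hrep_apply : ∀ i j, c i ≠ c j → B (rep (c i)) (rep (c j)) = B i j := fun i j hij => by
    rw [hconst i _ _ (hrep _).symm (by rwa [hrep]), ← hs.apply,
      hconst j _ _ (hrep _).symm (Ne.symm hij), hs.apply]
  let AF : Matrix (Fin m) (Fin m) ℤ := fun v w => if v = w then 0 else B (rep v) (rep w)
  let a v := Fintype.card {i // c i = v}
  let e : ι ≃ (Σ v : Fin m, Fin (a v)) :=
    (Equiv.sigmaFiberEquiv c).symm.trans (Equiv.sigmaCongrRight fun v => Fintype.equivFin _)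
  refine ⟨AF, ?_, fun v => if_pos rfl, fun u v => ?_, a,
    fun v => Fintype.card_pos_iff.mpr ⟨⟨rep v, hrep v⟩⟩, e, ?_⟩
  · refine IsSymm.ext fun v w => ?_
    by_cases hvw : v = w
    · simp [AF, hvw]
    · simp [AF, hvw, Ne.symm hvw, hs.apply]
  · by_cases huv : u = v
    · simp [AF, huv]
    · simpa [AF, huv] using hout (rep u) (rep v) (by rwa [hrep, hrep])
  · ext i j
    have he : ∀ i, (e i).1 = c i := fun _ => rfl
    simp only [submatrix_apply, blowup, he]
    split_ifs with hij hc
    · rw [e.injective hij, h0]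
    · exact hin i j (fun h => hij (congrArg e h)) hc
    · simp [AF, hc, hrep_apply i j hc]

namespace Matrix

variable {ι : Type*}

structure TriangleCondition (A : Matrix ι ι ℤ) : Prop where
  isSymm : A.IsSymm
  apply_self : ∀ i, A i i = 0
  sq_le_four : ∀ i j, A i j ^ 2 ≤ 4
  mul_mul_eq_eight : ∀ {i j k}, i ≠ k → A i j ^ 2 = 4 → A j k ^ 2 = 4 →
    A i j * A j k * A i k = 8
  two_mul_eq_mul : ∀ {i j k}, i ≠ k → A i j ^ 2 = 4 → A i k ^ 2 ≠ 4 →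
    2 * A j k = A i j * A i k

def switching (d : ι → ℤ) (A : Matrix ι ι ℤ) : Matrix ι ι ℤ :=
  fun i j => d i * d j * A i j

section Switching

variable {d : ι → ℤ} (hd : ∀ i, d i = 1 ∨ d i = -1) {A : Matrix ι ι ℤ}
include hd

lemma switching_sq (i j : ι) : switching d A i j ^ 2 = A i j ^ 2 := by
  simp [switching, mul_pow, sq_eq_one_iff.mpr (hd _)]

lemma diagonal_transpose_mul_switching_mul_diagonal [Fintype ι] [DecidableEq ι] :
    (diagonal d)ᵀ * switching d A * diagonal d = A := by
  ext i j
  rw [diagonal_transpose, mul_diagonal, diagonal_mul]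
  rcases hd i with hi | hi <;> rcases hd j with hj | hj <;> simp [switching, hi, hj]

lemma triangleCondition_switching (hA : TriangleCondition A) :
    TriangleCondition (switching d A) where
  isSymm := by ext i j; simp [switching, hA.isSymm.apply i j, mul_comm]
  apply_self i := by simp [switching, hA.apply_self]
  sq_le_four i j := by rw [switching_sq hd]; exact hA.sq_le_four i j
  mul_mul_eq_eight {i j k} hik hij hjk := by
    rw [switching_sq hd] at hij hjk
    have h := hA.mul_mul_eq_eight hik hij hjk
    have hsq := fun l => sq_eq_one_iff.mpr (hd l)
    calc switching d A i j * switching d A j k * switching d A i k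
        = d i ^ 2 * d j ^ 2 * d k ^ 2 * (A i j * A j k * A i k) := by
          simp only [switching]; ring
      _ = 8 := by rw [hsq, hsq, hsq, h]; ring
  two_mul_eq_mul {i j k} hik hij hik' := by
    rw [switching_sq hd] at hij hik'
    have h := hA.two_mul_eq_mul hik hij hik'
    have hsq := sq_eq_one_iff.mpr (hd i)
    simp only [switching]
    linear_combination d j * d k * h - A i j * A i k * d j * d k * hsq

end Switching

namespace TriangleCondition

variable {A : Matrix ι ι ℤ} (hA : TriangleCondition A)
include hA

lemma sq_eq_four_trans {i j k : ι} (hik : i ≠ k) (hij : A i j ^ 2 = 4) (hjk : A j k ^ 2 = 4) :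
    A i k ^ 2 = 4 := by
  have h := congrArg (· ^ 2) (hA.mul_mul_eq_eight hik hij hjk)
  simp only [mul_pow, hij, hjk] at h
  linarith

def classSetoid : Setoid ι where
  r i j := i = j ∨ A i j ^ 2 = 4
  iseqv.refl _ := .inl rfl
  iseqv.symm := by
    rintro i j (rfl | h)
    · exact .inl rfl
    · exact .inr (by rwa [hA.isSymm.apply])
  iseqv.trans := by
    rintro i j k (rfl | hij) (rfl | hjk)
    · exact .inl rfl
    · exact .inr hjk
    · exact .inr hij
    · rcases eq_or_ne i k with hik | hik
      · exact .inl hik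
      · exact .inr (hA.sq_eq_four_trans hik hij hjk)

lemma exists_switching_eq_two :
    ∃ d : ι → ℤ, (∀ i, d i = 1 ∨ d i = -1) ∧
      ∀ i j, i ≠ j → switching d A i j ^ 2 = 4 → switching d A i j = 2 := by
  let S := hA.classSetoid
  let rep : ι → ι := fun i => (Quotient.mk S i).out
  have hrep : ∀ i, S (rep i) i := fun i => Quotient.mk_out (s := S) i
  have hrep_eq : ∀ {i j}, S i j → rep i = rep j := fun h =>
    congrArg Quotient.out (Quotient.sound h)
  let d : ι → ℤ := fun i => if A (rep i) i = -2 then -1 else 1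
  have hd : ∀ i, d i = 1 ∨ d i = -1 := fun i => by unfold d; split_ifs <;> simp
  have hB := triangleCondition_switching hd hA
  have hrep_two : ∀ i, rep i ≠ i → switching d A (rep i) i = 2 := by
    intro i hi
    have hd_rep : d (rep i) = 1 := by simp [d, hrep_eq (hrep i), hA.apply_self]
    have hsq : A (rep i) i ^ 2 = 2 ^ 2 := ((hrep i).resolve_left hi).trans (by norm_num)
    rcases sq_eq_sq_iff_eq_or_eq_neg.mp hsq with h | h <;> simp [switching, hd_rep, d, h]
  refine ⟨d, hd, fun i j hij hsq => ?_⟩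
  have hr : rep i = rep j := hrep_eq (.inr (by rwa [switching_sq hd] at hsq))
  by_cases hi : rep i = i
  · rw [← hi, hr]
    exact hrep_two j (by rwa [← hr, hi])
  by_cases hj : rep j = j
  · rw [← hB.isSymm.apply, ← hj, ← hr]
    exact hrep_two i hi
  -- the triangle through the common representative reads `2 * switching d A i j * 2 = 8`
  have h8 := hB.mul_mul_eq_eight (i := rep i) (j := i) (k := j) (by rwa [hr])
    (by rw [hrep_two i hi]; norm_num) hsq
  rw [hrep_two i hi, hr, hrep_two j hj] at h8
  linarith

lemma exists_blowup [Fintype ι] (hnorm : ∀ i j, i ≠ j → A i j ^ 2 = 4 → A i j = 2) :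
    ∃ (m : ℕ) (AF : Matrix (Fin m) (Fin m) ℤ),
      AF.IsSymm ∧ (∀ v, AF v v = 0) ∧ (∀ u v, AF u v = 0 ∨ AF u v = 1 ∨ AF u v = -1) ∧
      ∃ a : Fin m → ℕ, (∀ v, 1 ≤ a v) ∧
        ∃ e : ι ≃ (Σ v : Fin m, Fin (a v)), A = (blowup AF a).submatrix e e := by
  let S := hA.classSetoid
  let c : ι → Fin (Nat.card (Quotient S)) := fun i => Finite.equivFin _ (Quotient.mk S i)
  have hc : ∀ i j, c i = c j ↔ i = j ∨ A i j ^ 2 = 4 := fun i j => by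
    simp only [c, Equiv.apply_eq_iff_eq, Quotient.eq]; rfl
  have hsq_ne : ∀ i j, c i ≠ c j → A i j ^ 2 ≠ 4 := fun i j h hsq => h ((hc i j).mpr (.inr hsq))
  refine ⟨_, exists_blowup_of_classes A c ?_ hA.isSymm hA.apply_self ?_ ?_ ?_⟩
  · exact (Finite.equivFin _).surjective.comp Quotient.mk_surjective
  · exact fun i j hij h => hnorm i j hij (((hc i j).mp h).resolve_left hij)
  · exact fun i j h => Int.eq_zero_or_eq_one_or_eq_neg_one_of_sq_lt_four
      (lt_of_le_of_ne (hA.sq_le_four i j) (hsq_ne i j h))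
  · intro i i' j hi hij
    rcases eq_or_ne i i' with rfl | hii'
    · rfl
    have h2 := hnorm i i' hii' (((hc i i').mp hi).resolve_left hii')
    have := hA.two_mul_eq_mul (fun h => hij (congrArg c h)) (by rw [h2]; norm_num) (hsq_ne i j hij)
    rw [h2] at this
    linarith

end TriangleCondition

end Matrix

lemma triangleCondition_of_spectrum {n : ℕ} (hn : 3 ≤ n) {A : Matrix (Fin n) (Fin n) ℤ}
    (hAs : A.IsSymm) (hAh : ∀ i, A i i = 0)
    (h3 : ∀ f : Fin 3 → Fin n, Function.Injective f →
      ∀ μ ∈ spectrum ℝ ((A.submatrix f f).map (fun x : ℤ => (x : ℝ))), -√5 < μ) :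
    A.TriangleCondition := by
  have hcubic : ∀ {i j k}, i ≠ j → j ≠ k → i ≠ k → ∀ t, √5 ≤ t →
      0 < triangleCubic (A i j) (A j k) (A i k) t := fun hij hjk hik _ ht =>
    triangleCubic_pos_of_spectrum hAs hAh h3 hij hjk hik ht
  have hsq : ∀ i j, A i j ^ 2 ≤ 4 := by
    intro i j
    rcases eq_or_ne i j with rfl | hij
    · simp [hAh]
    obtain ⟨k, hki, hkj⟩ := Fin.exists_ne_and_ne_of_two_lt i j (by omega)
    exact sq_le_four_of_triangleCubic_pos (hcubic hij hkj.symm hki.symm)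
  have hrules {i j k} (hij : i ≠ j) (hjk : j ≠ k) (hik : i ≠ k) :=
    triangle_rules_of_triangleCubic_sqrt_five_pos (hsq i j) (hsq j k) (hsq i k)
      (hcubic hij hjk hik _ le_rfl)
  have hne : ∀ {i j}, A i j ^ 2 = 4 → i ≠ j := by
    rintro i j h rfl
    simp [hAh] at h
  refine ⟨hAs, hAh, hsq, fun hik hij hjk => ?_, fun hik hij hik' => ?_⟩
  · exact (hrules (hne hij) (hne hjk) hik).1 hij hjk
  · refine (hrules (hne hij) ?_ hik).2 hij hik'
    rintro rfl
    exact hik' hij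

theorem stmt11 {n : ℕ} (hn : 3 ≤ n) (A : Matrix (Fin n) (Fin n) ℤ)
    (hAs : A.IsSymm) (hAh : ∀ i, A i i = 0)
    (h3 : ∀ f : Fin 3 → Fin n, Function.Injective f →
      ∀ μ ∈ spectrum ℝ ((A.submatrix f f).map (fun x : ℤ => (x : ℝ))),
        -Real.sqrt 5 < μ) :
    ∃ (m : ℕ) (AF : Matrix (Fin m) (Fin m) ℤ),
      AF.IsSymm ∧ (∀ v, AF v v = 0) ∧
      (∀ u v, AF u v = 0 ∨ AF u v = 1 ∨ AF u v = -1) ∧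
      ∃ (a : Fin m → ℕ), (∀ v, 1 ≤ a v) ∧
        ∃ (e : Fin n ≃ (Σ v : Fin m, Fin (a v))) (d : Fin n → ℤ),
          (∀ i, d i = 1 ∨ d i = -1) ∧
          A = (Matrix.diagonal d)ᵀ * ((blowup AF a).submatrix e e) * Matrix.diagonal d := by
  have hA := triangleCondition_of_spectrum hn hAs hAh h3
  obtain ⟨d, hd, hnorm⟩ := hA.exists_switching_eq_two
  obtain ⟨m, AF, hAFs, hAFh, hAFsigned, a, ha, e, he⟩ :=
    (triangleCondition_switching hd hA).exists_blowup hnorm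
  refine ⟨m, AF, hAFs, hAFh, hAFsigned, a, ha, e, d, hd, ?_⟩
  rw [← he, diagonal_transpose_mul_switching_mul_diagonal hd]
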